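/- arXiv:2201.10302 — 6 statements merged into one kernel-verified Lean document; each statement's English description precedes it below -/
import Mathlib

section
/- The category of finite posets with quotient maps (arrows reversed) has the amalgamation property: given finite posets A, B, C and quotient maps f : B → A and g : C → A, there exist a finite poset D and quotient maps q : D → B and p : D → C with f ∘ q = g ∘ p. -/
def IsPosetQuotient {A B : Type*} [Preorder A] [Preorder B] (f : A → B) : Prop :=
  Function.Surjective f ∧ Monotone f ∧
    ∀ p r : B, p ≤ r → ∃ x y : A, x ≤ y ∧ f x = p ∧ f y = r

/-!
The amalgam is the fibre product `D = {(b, c) | f b = g c}` with the product order. Its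
projection to `B` is a quotient map because `g` is one: a relation `b ≤ b'` maps to
`f b ≤ f b'`, which `g` lifts to some `c ≤ c'`, and then `(b, c) ≤ (b', c')` in `D`.
Symmetrically for the projection to `C`.
-/

section

variable {A B C : Type*} [Preorder A] [Preorder B] [Preorder C]

theorem IsPosetQuotient.comp {f : B → C} {g : A → B} (hf : IsPosetQuotient f)
    (hg : IsPosetQuotient g) : IsPosetQuotient (f ∘ g) := by
  refine ⟨hf.1.comp hg.1, hf.2.1.comp hg.2.1, fun p r hpr => ?_⟩
  obtain ⟨x, y, hxy, rfl, rfl⟩ := hf.2.2 p r hpr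
  obtain ⟨u, v, huv, rfl, rfl⟩ := hg.2.2 x y hxy
  exact ⟨u, v, huv, rfl, rfl⟩

theorem OrderIso.isPosetQuotient (e : A ≃o B) : IsPosetQuotient e :=
  ⟨e.surjective, e.monotone, fun p r hpr =>
    ⟨e.symm p, e.symm r, e.symm.monotone hpr, e.apply_symm_apply p, e.apply_symm_apply r⟩⟩

namespace Function.Pullback

variable {f : B → A} {g : C → A}

def swapOrderIso : f.Pullback g ≃o g.Pullback f where
  toFun x := ⟨x.1.swap, x.2.symm⟩
  invFun x := ⟨x.1.swap, x.2.symm⟩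
  left_inv _ := rfl
  right_inv _ := rfl
  map_rel_iff' := and_comm

theorem isPosetQuotient_fst (hf : Monotone f) (hg : IsPosetQuotient g) :
    IsPosetQuotient (fst : f.Pullback g → B) := by
  refine ⟨fun b => ?_, fun x y hxy => hxy.1, fun b b' hbb' => ?_⟩
  · obtain ⟨c, hc⟩ := hg.1 (f b)
    exact ⟨⟨(b, c), hc.symm⟩, rfl⟩
  · obtain ⟨c, c', hcc', hc, hc'⟩ := hg.2.2 (f b) (f b') (hf hbb')
    exact ⟨⟨(b, c), hc.symm⟩, ⟨(b', c'), hc'.symm⟩, ⟨hbb', hcc'⟩, rfl, rfl⟩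

theorem isPosetQuotient_snd (hf : IsPosetQuotient f) (hg : Monotone g) :
    IsPosetQuotient (snd : f.Pullback g → C) :=
  (isPosetQuotient_fst hg hf).comp (swapOrderIso (f := f) (g := g)).isPosetQuotient

end Function.Pullback

end

theorem stmt_3_general {A B C : Type*} [PartialOrder A] [PartialOrder B] [PartialOrder C]
    [Fintype B] [Fintype C] (f : B → A) (g : C → A)
    (hf : IsPosetQuotient f) (hg : IsPosetQuotient g) :
    ∃ (D : Type) (iD : PartialOrder D) (_ : Fintype D) (q : D → B) (p : D → C),
      @IsPosetQuotient D B iD.toPreorder inferInstance q ∧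
      @IsPosetQuotient D C iD.toPreorder inferInstance p ∧
      f ∘ q = g ∘ p := by
  classical
  let e := (orderIsoShrink.{0} (f.Pullback g)).symm
  refine ⟨Shrink (f.Pullback g), inferInstance, inferInstance,
    Function.Pullback.fst ∘ e, Function.Pullback.snd ∘ e,
    (Function.Pullback.isPosetQuotient_fst hf.2.1 hg).comp e.isPosetQuotient,
    (Function.Pullback.isPosetQuotient_snd hf hg.2.1).comp e.isPosetQuotient, ?_⟩
  rw [← Function.comp_assoc, ← Function.comp_assoc, Function.pullback_comm_sq]

/-- the category of finite posets with quotient maps has the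
amalgamation property. -/
theorem stmt_3 {A B C : Type*} [PartialOrder A] [PartialOrder B] [PartialOrder C]
    [Fintype A] [Fintype B] [Fintype C] (f : B → A) (g : C → A)
    (hf : IsPosetQuotient f) (hg : IsPosetQuotient g) :
    ∃ (D : Type) (iD : PartialOrder D) (_ : Fintype D) (q : D → B) (p : D → C),
      @IsPosetQuotient D B iD.toPreorder inferInstance q ∧
      @IsPosetQuotient D C iD.toPreorder inferInstance p ∧
      f ∘ q = g ∘ p :=
  stmt_3_general f g hf hg
end

section
/- Let ℙ = {0,1,2,3}^ω with the partial order defined by: x ≤ y iff x = y, or there exists n with x(k)=y(k) for k<n, x(n)=2, y(n)=3, and x(k)=y(k)∈{0,1} for k>n, or x(0)=0, y(0)=1 and x(k)=y(k)∈{0,1} for all k≥1. Then for x, y ∈ ℙ, x ≤ y if and only if for every n the restrictions satisfy x↾n ≤_n y↾n, where ≤_n is the analogously defined order on {0,1,2,3}^n. -/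
/-- The order on `ℙ = {0,1,2,3}^ω`. -/
def leOmega (x y : ℕ → Fin 4) : Prop :=
  x = y ∨
  (∃ n : ℕ, (∀ k < n, x k = y k) ∧ x n = 2 ∧ y n = 3 ∧
    ∀ k, n < k → x k = y k ∧ (x k = 0 ∨ x k = 1)) ∨
  (x 0 = 0 ∧ y 0 = 1 ∧ ∀ k : ℕ, 1 ≤ k → x k = y k ∧ (x k = 0 ∨ x k = 1))

/-- The order `≤ₙ` on `P_n = {0,1,2,3}^n`. -/
def leFin {n : ℕ} (x y : Fin n → Fin 4) : Prop :=
  x = y ∨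
  (∃ l : Fin n, (∀ k, k < l → x k = y k) ∧ x l = 2 ∧ y l = 3 ∧
    ∀ k, l < k → x k = y k ∧ (x k = 0 ∨ x k = 1)) ∨
  (∃ h : 0 < n, x ⟨0, h⟩ = 0 ∧ y ⟨0, h⟩ = 1 ∧
    ∀ k : Fin n, 1 ≤ (k : ℕ) → x k = y k ∧ (x k = 0 ∨ x k = 1))

/-!
If `x ≠ y`, let `m` be the first coordinate where they differ. In any restriction of length
`n > m`, the witness of `≤ₙ` must sit at `m` itself: an earlier witness `l` would need
`x l ≠ y l`, and a later one would need `x m = y m`. So the restriction to `m + 1` decides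
which clause of `≤` holds, and the restriction to `k + 1` gives the tail condition at `k`.
-/

theorem exists_first_ne {α : Type*} {x y : ℕ → α} (h : x ≠ y) :
    ∃ m, x m ≠ y m ∧ ∀ k < m, x k = y k := by
  classical
  have hex := Function.ne_iff.1 h
  exact ⟨Nat.find hex, Nat.find_spec hex, fun k hk => not_not.1 (Nat.find_min hex hk)⟩

theorem leOmega.leFin_restrict {x y : ℕ → Fin 4} (h : leOmega x y) (n : ℕ) :
    leFin (fun k : Fin n => x k) (fun k : Fin n => y k) := by
  rcases h with rfl | ⟨m, hlt, hx, hy, htail⟩ | ⟨hx, hy, htail⟩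
  · exact Or.inl rfl
  · by_cases hmn : m < n
    · exact Or.inr (Or.inl ⟨⟨m, hmn⟩, fun k hk => hlt k hk, hx, hy, fun k hk => htail k hk⟩)
    · exact Or.inl (funext fun k => hlt k (by omega))
  · rcases Nat.eq_zero_or_pos n with rfl | hn
    · exact Or.inl (funext fun k => k.elim0)
    · exact Or.inr (Or.inr ⟨hn, hx, hy, fun k hk => htail k hk⟩)

theorem leFin.firstDiff {n : ℕ} {u v : Fin n → Fin 4} (h : leFin u v) {m : Fin n}
    (hmin : ∀ k < m, u k = v k) (hm : u m ≠ v m) :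
    ((u m = 2 ∧ v m = 3) ∨ ((m : ℕ) = 0 ∧ u m = 0 ∧ v m = 1)) ∧
      ∀ k, m < k → u k = v k ∧ (u k = 0 ∨ u k = 1) := by
  rcases h with rfl | ⟨l, hlt, hu, hv, htail⟩ | ⟨hn, hu, hv, htail⟩
  · exact absurd rfl hm
  · obtain rfl : l = m := by
      rcases lt_trichotomy l m with hlm | rfl | hml
      · have := hmin l hlm
        rw [hu, hv] at this
        exact absurd this (by decide)
      · rfl
      · exact absurd (hlt m hml) hm
    exact ⟨Or.inl ⟨hu, hv⟩, htail⟩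
  · obtain rfl : m = ⟨0, hn⟩ := Fin.ext <| by
      by_contra hne
      have := hmin ⟨0, hn⟩ (Fin.lt_def.2 (Nat.pos_of_ne_zero hne))
      rw [hu, hv] at this
      exact absurd this (by decide)
    exact ⟨Or.inr ⟨rfl, hu, hv⟩, fun k hk => htail k (Fin.lt_def.1 hk)⟩

/-- `x ≤ y` in `ℙ` iff all finite restrictions satisfy `x↾n ≤ₙ y↾n`. -/
theorem stmt_7 (x y : ℕ → Fin 4) :
    leOmega x y ↔ ∀ n : ℕ, leFin (fun k : Fin n => x k.1) (fun k : Fin n => y k.1) := by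
  refine ⟨fun h n => leOmega.leFin_restrict h n, fun h => ?_⟩
  by_cases hxy : x = y
  · exact Or.inl hxy
  obtain ⟨m, hm, hmin⟩ := exists_first_ne hxy
  have atFirstDiff (n : ℕ) (hmn : m < n) := leFin.firstDiff (h n) (m := ⟨m, hmn⟩)
    (fun k hk => hmin k hk) hm
  have tail (k : ℕ) (hk : m < k) : x k = y k ∧ (x k = 0 ∨ x k = 1) :=
    (atFirstDiff (k + 1) (by omega)).2 ⟨k, k.lt_succ_self⟩ hk
  rcases (atFirstDiff (m + 1) m.lt_succ_self).1 with ⟨hx, hy⟩ | ⟨hm0, hx, hy⟩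
  · exact Or.inr (Or.inl ⟨m, hmin, hx, hy, tail⟩)
  · obtain rfl : m = 0 := hm0
    exact Or.inr (Or.inr ⟨hx, hy, tail⟩)
end

section
/- Let (X,d) be a compact metric space and E a closed relation on X (a closed subset of X × X). Then the set of E-isolated points — points x such that for every y ≠ x neither (x,y) ∈ E nor (y,x) ∈ E — is a G_δ subset of X. -/
open Set

/-- The closed set `S ∩ Vᶜ` projects to a closed set since `Y` is compact, and writing the closed
set `Uᶜ` as a countable intersection of open sets exhibits `S ∩ U` as a countable union of
such sets. -/
theorem isGδ_compl_image_fst_inter {X Y : Type*} [TopologicalSpace X] [TopologicalSpace Y]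
    [CompactSpace Y] [PerfectlyNormalSpace (X × Y)] {S U : Set (X × Y)} (hS : IsClosed S)
    (hU : IsOpen U) : IsGδ (Prod.fst '' (S ∩ U))ᶜ := by
  obtain ⟨V, hV_open, hV⟩ := isGδ_iff_eq_iInter_nat.1 hU.isClosed_compl.isGδ
  have hU_eq : U = ⋃ n, (V n)ᶜ := by
    rw [← compl_compl U, hV, compl_iInter]
  rw [hU_eq, inter_iUnion, image_iUnion, compl_iUnion]
  exact .iInter fun n =>
    (isClosedMap_fst_of_compactSpace _ (hS.inter (hV_open n).isClosed_compl)).isOpen_compl.isGδ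

theorem setOf_isolated_eq_compl_image_fst {X : Type*} (E : Set (X × X)) :
    {x : X | ∀ y : X, y ≠ x → (x, y) ∉ E ∧ (y, x) ∉ E} =
      (Prod.fst '' ((E ∪ Prod.swap ⁻¹' E) ∩ (diagonal X)ᶜ))ᶜ := by
  ext x
  simp only [mem_ofPred_eq, mem_compl_iff, mem_image, mem_inter_iff, mem_union, mem_preimage,
    mem_diagonal_iff, Prod.exists, Prod.swap_prod_mk, exists_and_right, exists_eq_right]
  grind

/-- for a closed relation `E` on a compact metric space, the set of
`E`-isolated points is a `Gδ` set. -/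
theorem stmt_10 {X : Type*} [MetricSpace X] [CompactSpace X]
    (E : Set (X × X)) (hE : IsClosed E) :
    IsGδ {x : X | ∀ y : X, y ≠ x → (x, y) ∉ E ∧ (y, x) ∉ E} := by
  rw [setOf_isolated_eq_compl_image_fst]
  exact isGδ_compl_image_fst_inter (hE.union (hE.preimage continuous_swap))
    isClosed_diagonal.isOpen_compl
end

section
/- In the poset ℙ = {0,1,2,3}^ω with the order defined coordinatewise via the conditions (i)_ω and (ii)_ω, the set of order-isolated points (points comparable with no other point) is a dense G_δ subset of ℙ with the product topology. -/
/-- The set of order-isolated points of `ℙ`: points comparable with no other point. -/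
def isolatedPts : Set (ℕ → Fin 4) :=
  {x | ∀ y : ℕ → Fin 4, (leOmega x y ∨ leOmega y x) → y = x}

/-!
A point `x` of `ℙ` is comparable with some other point exactly when its coordinates are
eventually in `{0,1}`: every relation `x < y` or `y < x` forces such a binary tail on `x`, and
conversely, if `m` is the last coordinate of `x` outside `{0,1}` one can switch `x m` between `2`
and `3` (or, if there is no such `m`, switch `x 0` between `0` and `1`). Hence the isolated points
are those with infinitely many coordinates in `{2,3}`, a countable intersection of open sets
containing every point that is eventually `2`, and these are dense.
-/

open Filter Topology Function

theorem isGδ_setOf_frequently_mem {X : Type*} [TopologicalSpace X] {U : ℕ → Set X}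
    (hU : ∀ k, IsOpen (U k)) : IsGδ {x | ∃ᶠ k in atTop, x ∈ U k} := by
  have hset : {x | ∃ᶠ k in atTop, x ∈ U k} = ⋂ n, ⋃ k ≥ n, U k := by
    ext x
    simp [frequently_atTop]
  rw [hset]
  exact IsGδ.iInter_of_isOpen fun n => isOpen_biUnion fun k _ => hU k

theorem tendsto_ite_lt_atTop_nhds {X : ℕ → Type*} [∀ k, TopologicalSpace (X k)]
    (x y : ∀ k, X k) : Tendsto (fun j k => if k < j then x k else y k) atTop (𝓝 x) := by
  refine tendsto_pi_nhds.2 fun k => tendsto_const_nhds.congr' ?_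
  filter_upwards [eventually_gt_atTop k] with j hj
  simp [hj]

theorem Nat.exists_not_and_forall_gt_of_eventually {p : ℕ → Prop} (hp : ∀ᶠ k in atTop, p k)
    (hm : ∃ m, ¬p m) : ∃ m, ¬p m ∧ ∀ k > m, p k := by
  classical
  have hex : ∃ n, ∀ k ≥ n, p k := eventually_atTop.1 hp
  have hpos : Nat.find hex ≠ 0 := by
    intro h0
    obtain ⟨m, hm⟩ := hm
    exact hm (Nat.find_spec hex m (by omega))
  refine ⟨Nat.find hex - 1, fun hlast => ?_, fun k hk => Nat.find_spec hex k (by omega)⟩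
  refine Nat.find_min hex (Nat.sub_one_lt hpos) fun k hk => ?_
  rcases hk.eq_or_lt with rfl | hk
  · exact hlast
  · exact Nat.find_spec hex k (by omega)

theorem eventually_binary_of_leOmega_of_ne {x y : ℕ → Fin 4} (hxy : leOmega x y) (hne : x ≠ y) :
    (∀ᶠ k in atTop, x k = 0 ∨ x k = 1) ∧ ∀ᶠ k in atTop, y k = 0 ∨ y k = 1 := by
  rcases hxy with rfl | ⟨n, -, -, -, htail⟩ | ⟨-, -, htail⟩
  · exact absurd rfl hne
  · refine ⟨?_, ?_⟩ <;> filter_upwards [eventually_gt_atTop n] with k hk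
    · exact (htail k hk).2
    · exact (htail k hk).1 ▸ (htail k hk).2
  · refine ⟨?_, ?_⟩ <;> filter_upwards [eventually_ge_atTop 1] with k hk
    · exact (htail k hk).2
    · exact (htail k hk).1 ▸ (htail k hk).2

theorem leOmega_update_two_three {x : ℕ → Fin 4} {m : ℕ} (hx : ∀ k > m, x k = 0 ∨ x k = 1) :
    leOmega (update x m 2) (update x m 3) := by
  refine Or.inr (Or.inl ⟨m, fun k hk => ?_, by simp, by simp, fun k hk => ?_⟩)
  · simp [hk.ne]
  · simpa [hk.ne'] using hx k hk

theorem leOmega_update_zero_one {x : ℕ → Fin 4} (hx : ∀ k ≥ 1, x k = 0 ∨ x k = 1) :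
    leOmega (update x 0 0) (update x 0 1) := by
  refine Or.inr (Or.inr ⟨by simp, by simp, fun k hk => ?_⟩)
  have hk0 : k ≠ 0 := by omega
  simpa [hk0] using hx k hk

theorem exists_ne_comparable_of_leOmega {a b x : ℕ → Fin 4} (hab : leOmega a b) (hne : a ≠ b)
    (hx : x = a ∨ x = b) : ∃ y ≠ x, leOmega x y ∨ leOmega y x := by
  rcases hx with rfl | rfl
  · exact ⟨b, hne.symm, Or.inl hab⟩
  · exact ⟨a, hne, Or.inr hab⟩

theorem exists_ne_comparable_of_eventually_binary {x : ℕ → Fin 4}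
    (hx : ∀ᶠ k in atTop, x k = 0 ∨ x k = 1) : ∃ y ≠ x, leOmega x y ∨ leOmega y x := by
  by_cases hbin : ∀ k, x k = 0 ∨ x k = 1
  · refine exists_ne_comparable_of_leOmega (leOmega_update_zero_one fun k _ => hbin k)
      (fun h => absurd (congr_fun h 0) (by simp)) ?_
    rcases hbin 0 with h | h
    · exact Or.inl (update_eq_self_iff.2 h.symm).symm
    · exact Or.inr (update_eq_self_iff.2 h.symm).symm
  · obtain ⟨m, hm, htail⟩ := Nat.exists_not_and_forall_gt_of_eventually hx (not_forall.1 hbin)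
    refine exists_ne_comparable_of_leOmega (leOmega_update_two_three htail)
      (fun h => absurd (congr_fun h m) (by simp)) ?_
    have h23 : ∀ a : Fin 4, ¬(a = 0 ∨ a = 1) → a = 2 ∨ a = 3 := by decide
    rcases h23 _ hm with h | h
    · exact Or.inl (update_eq_self_iff.2 h.symm).symm
    · exact Or.inr (update_eq_self_iff.2 h.symm).symm

theorem isolatedPts_eq_setOf_frequently :
    isolatedPts = {x | ∃ᶠ k in atTop, x k ∈ ({0, 1}ᶜ : Set (Fin 4))} := by
  ext x
  simp only [Set.mem_ofPred_eq, Set.mem_compl_iff, Set.mem_insert_iff, Set.mem_singleton_iff,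
    ← not_eventually]
  change (∀ y, leOmega x y ∨ leOmega y x → y = x) ↔ _
  constructor
  · intro hiso hbin
    obtain ⟨y, hne, hcomp⟩ := exists_ne_comparable_of_eventually_binary hbin
    exact hne (hiso y hcomp)
  · intro hnot y hcomp
    by_contra hne
    rcases hcomp with h | h
    · exact hnot (eventually_binary_of_leOmega_of_ne h (Ne.symm hne)).1
    · exact hnot (eventually_binary_of_leOmega_of_ne h hne).2

/-- the set of order-isolated points of `ℙ = {0,1,2,3}^ω` is a dense
`Gδ` subset of `ℙ` with the product topology. -/
theorem stmt_11 : IsGδ isolatedPts ∧ Dense isolatedPts := by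
  rw [isolatedPts_eq_setOf_frequently]
  refine ⟨isGδ_setOf_frequently_mem (U := fun k => (fun x : ℕ → Fin 4 => x k) ⁻¹' {0, 1}ᶜ)
    fun k => (isOpen_discrete _).preimage (continuous_apply k),
    fun x => mem_closure_of_tendsto (tendsto_ite_lt_atTop_nhds x fun _ => 2) ?_⟩
  refine Eventually.of_forall fun j => Eventually.frequently ?_
  filter_upwards [eventually_ge_atTop j] with k hk
  simp [not_lt.2 hk]
end

section
/- Let P, Q be finite posets and p : Q → P a quotient map, with induced map p̂ : O(Q) → O(P). Then p̂ is a lattice homomorphism (i.e., also preserves binary intersections) if and only if for all x, y ∈ Q and t ∈ P, whenever t ≤ p(x) and t ≤ p(y) there exists z ∈ Q with z ≤ x, z ≤ y and t ≤ p(z). -/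
/-- The induced map on down-sets, via the canonical decomposition into principal
down-sets of maximal elements. -/
def inducedMap {Q P : Type*} [Preorder Q] [Preorder P] (p : Q → P) (A : Set Q) : Set P :=
  ⋃ a ∈ {a ∈ A | ∀ b ∈ A, a ≤ b → a = b}, Set.Iic (p a)

/-! Over a finite poset every element of `A` lies below a maximal one, so `p̂ A` is simply the
down-closure of `p '' A`; both directions of the theorem are then a matter of unfolding
membership, the forward one applied to the principal down-sets `↓x` and `↓y`. -/

open Set

lemma mem_inducedMap_iff {Q P : Type*} [PartialOrder Q] [Preorder P] [Finite Q] {p : Q → P}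
    (hp : Monotone p) {A : Set Q} {t : P} :
    t ∈ inducedMap p A ↔ ∃ a ∈ A, t ≤ p a := by
  simp only [inducedMap, mem_iUnion₂, mem_ofPred_eq, mem_Iic, exists_prop]
  constructor
  · rintro ⟨a, ⟨ha, -⟩, ht⟩
    exact ⟨a, ha, ht⟩
  · rintro ⟨a, ha, ht⟩
    obtain ⟨m, ham, hm⟩ := (toFinite A).exists_le_maximal ha
    exact ⟨m, ⟨hm.prop, fun b hb hmb => hm.eq_of_le hb hmb⟩, ht.trans (hp ham)⟩

theorem stmt_14_general {Q P : Type*} [PartialOrder Q] [PartialOrder P] [Fintype Q]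
    (p : Q → P) (hp : IsPosetQuotient p) :
    (∀ A B : Set Q, IsLowerSet A → IsLowerSet B →
        inducedMap p (A ∩ B) = inducedMap p A ∩ inducedMap p B) ↔
    (∀ (x y : Q) (t : P), t ≤ p x → t ≤ p y →
        ∃ z : Q, z ≤ x ∧ z ≤ y ∧ t ≤ p z) := by
  have hmono : Monotone p := hp.2.1
  constructor
  · intro h x y t htx hty
    have ht : t ∈ inducedMap p (Iic x ∩ Iic y) := by
      rw [h _ _ (isLowerSet_Iic x) (isLowerSet_Iic y), mem_inter_iff, mem_inducedMap_iff hmono,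
        mem_inducedMap_iff hmono]
      exact ⟨⟨x, le_rfl, htx⟩, ⟨y, le_rfl, hty⟩⟩
    obtain ⟨z, ⟨hzx, hzy⟩, htz⟩ := (mem_inducedMap_iff hmono).1 ht
    exact ⟨z, hzx, hzy, htz⟩
  · intro h A B hA hB
    ext t
    simp only [mem_inter_iff, mem_inducedMap_iff hmono]
    constructor
    · rintro ⟨a, ⟨haA, haB⟩, ht⟩
      exact ⟨⟨a, haA, ht⟩, ⟨a, haB, ht⟩⟩
    · rintro ⟨⟨x, hxA, htx⟩, ⟨y, hyB, hty⟩⟩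
      obtain ⟨z, hzx, hzy, htz⟩ := h x y t htx hty
      exact ⟨z, ⟨hA hzx hxA, hB hzy hyB⟩, htz⟩

/-- for a quotient map `p` of finite posets, the induced map `p̂`
on down-set lattices is a lattice homomorphism (it always preserves unions, so
this amounts to preserving binary intersections) if and only if whenever
`t ≤ p(x)` and `t ≤ p(y)` there is `z ≤ x, y` with `t ≤ p(z)`. -/
theorem stmt_14 {Q P : Type*} [PartialOrder Q] [PartialOrder P] [Fintype Q] [Fintype P]
    (p : Q → P) (hp : IsPosetQuotient p) :
    (∀ A B : Set Q, IsLowerSet A → IsLowerSet B →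
        inducedMap p (A ∩ B) = inducedMap p A ∩ inducedMap p B) ↔
    (∀ (x y : Q) (t : P), t ≤ p x → t ≤ p y →
        ∃ z : Q, z ≤ x ∧ z ≤ y ∧ t ≤ p z) :=
  stmt_14_general p hp
end

section
/- The inverse limit 𝕆(P) of the down-set lattices O(P_n) with induced quotient bonding maps is an atomic lattice: it has a least element (∅,∅,…), and every nonzero element lies above an atom. -/
/-- Membership in the inverse limit `𝕆(P)` of the down-set lattices `O(P n)`. -/
def InOLim (P : ℕ → Type*) [∀ n, PartialOrder (P n)] (p : ∀ n, P (n + 1) → P n)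
    (a : ∀ n, Set (P n)) : Prop :=
  (∀ n, IsLowerSet (a n)) ∧ ∀ n, inducedMap (p n) (a (n + 1)) = a n

/-
Inside `𝕆(P)`, all coordinates of an element are empty as soon as one is, because a finite set
is empty exactly when it has no maximal element, i.e. when its image under the induced map is
empty. The nonzero elements below a given nonzero `a` therefore form a set in which every chain
has a lower bound: since each `Set (P n) × Set (P (n + 1))` is finite, some member of the chain is
least at coordinates `n` and `n + 1` simultaneously, so the coordinatewise minima are again
compatible with the induced maps. Zorn's lemma then yields a minimal nonzero element below `a`,
which is an atom.
-/

theorem IsChain.exists_forall_map_le {ι α : Type*} [Preorder ι] [Preorder α] {f : ι → α}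
    (hf : Monotone f) {C : Set ι} (hC : IsChain (· ≤ ·) C) (hfin : (f '' C).Finite)
    (hne : C.Nonempty) : ∃ c ∈ C, ∀ c' ∈ C, f c ≤ f c' := by
  obtain ⟨c, hcC, hmin⟩ := hfin.exists_minimalFor' f C hne
  refine ⟨c, hcC, fun c' hc' => ?_⟩
  rcases hC.total hcC hc' with h | h
  · exact hf h
  · exact hmin hc' (hf h)

section inducedMap

variable {Q R : Type*} [Preorder R] (f : Q → R)

@[simp]
theorem inducedMap_empty [Preorder Q] : inducedMap f ∅ = ∅ := by
  simp [inducedMap]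

theorem inducedMap_nonempty_iff [PartialOrder Q] [Finite Q] {A : Set Q} :
    (inducedMap f A).Nonempty ↔ A.Nonempty := by
  simp only [inducedMap, Set.nonempty_iUnion, Set.mem_ofPred_eq, exists_prop]
  constructor
  · rintro ⟨a, ⟨ha, -⟩, -⟩
    exact ⟨a, ha⟩
  · rintro ⟨a, ha⟩
    obtain ⟨b, -, hb⟩ := Finite.exists_le_maximal (p := (· ∈ A)) ha
    exact ⟨b, ⟨hb.1, fun c hc hbc => hb.eq_of_le hc hbc⟩, Set.nonempty_Iic⟩

end inducedMap

namespace InOLim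

variable {P : ℕ → Type*} [∀ n, PartialOrder (P n)] {p : ∀ n, P (n + 1) → P n}
  {a : ∀ n, Set (P n)}

theorem empty : InOLim P p (fun _ => ∅) :=
  ⟨fun _ => isLowerSet_empty, fun n => inducedMap_empty (p n)⟩

theorem nonempty_iff_nonempty_zero [∀ n, Finite (P n)] (h : InOLim P p a) (n : ℕ) :
    (a n).Nonempty ↔ (a 0).Nonempty := by
  induction n with
  | zero => rfl
  | succ n ih => rw [← ih, ← h.2 n, inducedMap_nonempty_iff]

theorem forall_nonempty_of_ne [∀ n, Finite (P n)] (h : InOLim P p a)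
    (hne : a ≠ fun _ => ∅) (n : ℕ) : (a n).Nonempty := by
  obtain ⟨m, hm⟩ := Function.ne_iff.mp hne
  exact (h.nonempty_iff_nonempty_zero n).2
    ((h.nonempty_iff_nonempty_zero m).1 (Set.nonempty_iff_ne_empty.2 hm))

theorem exists_lowerBound_of_isChain [∀ n, Finite (P n)] {C : Set (∀ n, Set (P n))}
    (hCO : ∀ c ∈ C, InOLim P p c) (hC : IsChain (· ≤ ·) C) (hne : C.Nonempty) :
    ∃ m, InOLim P p m ∧ m ∈ lowerBounds C ∧ ∀ n, ∃ c ∈ C, m n = c n := by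
  have hleast : ∀ n, ∃ c ∈ C, ∀ c' ∈ C, (c n, c (n + 1)) ≤ (c' n, c' (n + 1)) := fun n =>
    hC.exists_forall_map_le (f := fun c : ∀ k, Set (P k) => (c n, c (n + 1)))
      (fun _ _ h => Prod.mk_le_mk.2 ⟨Pi.le_def.1 h n, Pi.le_def.1 h (n + 1)⟩)
      (Set.toFinite _) hne
  choose c hcC hc using hleast
  have hshift : ∀ n, c n (n + 1) = c (n + 1) (n + 1) := fun n =>
    le_antisymm (hc n _ (hcC (n + 1))).2 (hc (n + 1) _ (hcC n)).1
  refine ⟨fun n => c n n, ⟨fun n => (hCO _ (hcC n)).1 n, fun n => ?_⟩,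
    fun c' hc' n => (hc n c' hc').1, fun n => ⟨c n, hcC n, rfl⟩⟩
  change inducedMap (p n) (c (n + 1) (n + 1)) = c n n
  rw [← hshift n]
  exact (hCO _ (hcC n)).2 n

theorem exists_minimal_le [∀ n, Finite (P n)] (h : InOLim P p a) (hne : ∀ n, (a n).Nonempty) :
    ∃ b ≤ a, Minimal (fun c => InOLim P p c ∧ ∀ n, (c n).Nonempty) b := by
  refine zorn_le_nonempty₀ (α := (∀ n, Set (P n))ᵒᵈ)
    {c | InOLim P p c.ofDual ∧ ∀ n, (c.ofDual n).Nonempty} ?_ (.toDual a) ⟨h, hne⟩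
  intro C hCS hC y hy
  obtain ⟨m, hm, hmC, hmcoord⟩ :=
    exists_lowerBound_of_isChain (fun c hc => (hCS hc).1) hC.symm ⟨y, hy⟩
  refine ⟨.toDual m, ⟨hm, fun n => ?_⟩, hmC⟩
  obtain ⟨c, hc, hmc⟩ := hmcoord n
  change (m n).Nonempty
  rw [hmc]
  exact (hCS hc).2 n

end InOLim

theorem stmt_17_general (P : ℕ → Type*) [∀ n, PartialOrder (P n)] [∀ n, Fintype (P n)]
    (p : ∀ n, P (n + 1) → P n) :
    InOLim P p (fun n => (∅ : Set (P n))) ∧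
    (∀ s : ∀ n, Set (P n), InOLim P p s → ∀ n, (∅ : Set (P n)) ⊆ s n) ∧
    ∀ a : ∀ n, Set (P n), InOLim P p a → a ≠ (fun n => (∅ : Set (P n))) →
      ∃ b : ∀ n, Set (P n), InOLim P p b ∧ b ≠ (fun n => (∅ : Set (P n))) ∧
        (∀ n, b n ⊆ a n) ∧
        ∀ c : ∀ n, Set (P n), InOLim P p c → (∀ n, c n ⊆ b n) → c ≠ b →
          c = (fun n => (∅ : Set (P n))) := by
  refine ⟨InOLim.empty, fun s _ n => Set.empty_subset _, fun a ha hne => ?_⟩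
  obtain ⟨b, hba, hb⟩ := ha.exists_minimal_le (ha.forall_nonempty_of_ne hne)
  refine ⟨b, hb.1.1, fun hb0 => ?_, hba, fun c hc hcb hcne => ?_⟩
  · simpa [hb0] using hb.1.2 0
  · by_contra hc0
    exact hcne (le_antisymm hcb (hb.2 ⟨hc, hc.forall_nonempty_of_ne hc0⟩ hcb))

/-- `𝕆(P)` is an atomic lattice: `(∅,∅,…)` is its least element and
every nonzero element lies above an atom. -/
theorem stmt_17 (P : ℕ → Type*) [∀ n, PartialOrder (P n)] [∀ n, Fintype (P n)]
    (p : ∀ n, P (n + 1) → P n) (hp : ∀ n, IsPosetQuotient (p n)) :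
    InOLim P p (fun n => (∅ : Set (P n))) ∧
    (∀ s : ∀ n, Set (P n), InOLim P p s → ∀ n, (∅ : Set (P n)) ⊆ s n) ∧
    ∀ a : ∀ n, Set (P n), InOLim P p a → a ≠ (fun n => (∅ : Set (P n))) →
      ∃ b : ∀ n, Set (P n), InOLim P p b ∧ b ≠ (fun n => (∅ : Set (P n))) ∧
        (∀ n, b n ⊆ a n) ∧
        ∀ c : ∀ n, Set (P n), InOLim P p c → (∀ n, c n ⊆ b n) → c ≠ b →
          c = (fun n => (∅ : Set (P n))) :=
  stmt_17_general P p
end
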